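/- The Ellentuck topology on Sub(X) is finer than the slice topology: every set of the form {Y ∈ Sub(X) : Y ∩ U ≠ ∅} with U open in X, and every set of the form {Y ∈ Sub(X) : dist(Y,C) > 0} with C a nonempty bounded closed convex subset of X, is open in the Ellentuck topology. -/

import Mathlib

/-- The set of closed linear subspaces of a normed space. -/
def ClosedSub (E : Type) [NormedAddCommGroup E] [NormedSpace ℝ E] :=
  {Y : Submodule ℝ E // IsClosed (Y : Set E)}

/-- The basic set `[F, Y]_ε` of the Ellentuck topology: the set of closed subspaces `Z`
for which there exist a closed subspace `Z'` with `F ⊆ Z' ⊆ Y` and an isomorphism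
`T : Z' → Z` with `‖T - Id_{Z'}‖ < ε`. -/
def ellSet (E : Type) [NormedAddCommGroup E] [NormedSpace ℝ E]
    (F Y : Submodule ℝ E) (ε : ℝ) : Set (ClosedSub E) :=
  {Z | ∃ Z' : Submodule ℝ E, IsClosed (Z' : Set E) ∧ F ≤ Z' ∧ Z' ≤ Y ∧
    ∃ T : ↥Z' ≃L[ℝ] ↥Z.1,
      ‖Z.1.subtypeL.comp (T : ↥Z' →L[ℝ] ↥Z.1) - Z'.subtypeL‖ < ε}

/-- The collection of all basic sets `[F, Y]_ε` with `F` finite-dimensional,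
`Y` closed with `F ⊆ Y`, and `ε > 0`. -/
def ellBasis (E : Type) [NormedAddCommGroup E] [NormedSpace ℝ E] :
    Set (Set (ClosedSub E)) :=
  {S | ∃ (F Y : Submodule ℝ E) (ε : ℝ), FiniteDimensional ℝ F ∧ IsClosed (Y : Set E) ∧
    F ≤ Y ∧ 0 < ε ∧ S = ellSet E F Y ε}

/-- The Ellentuck topology on `Sub(E)`, generated by the sets `[F, Y]_ε`. -/
def ellTop (E : Type) [NormedAddCommGroup E] [NormedSpace ℝ E] :
    TopologicalSpace (ClosedSub E) :=
  TopologicalSpace.generateFrom (ellBasis E)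

/-!
A subspace `Z ∈ [F, Y]_ε` is relatively `ε`-close to `Y`: it is the image of some `Z'` with
`F ⊆ Z' ⊆ Y` under an isomorphism `T` moving every `v` by at most `ε ‖v‖`. Hence both slice
sets are Ellentuck neighbourhoods of each of their points `Y`. If `y ∈ Y ∩ U`, take
`F = span {y}`: then `T y ∈ Z` lies within `ε ‖y‖` of `y`, so in `U`. If `Y` keeps distance
`r > 0` from `C ⊆ closedBall 0 M`, take `F = 0`: a point `z = T w ∈ Z` is within `ε ‖w‖` of
`w ∈ Y`, so it stays `r / 2` away from `C` when `w` is small, and lies far outside the ball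
containing `C` when `w` is large.
-/

section Ellentuck

variable {E : Type} [NormedAddCommGroup E] [NormedSpace ℝ E]

lemma mem_ellSet_self (Y : ClosedSub E) {F : Submodule ℝ E} (hF : F ≤ Y.1) {ε : ℝ}
    (hε : 0 < ε) : Y ∈ ellSet E F Y.1 ε := by
  refine ⟨Y.1, Y.2, hF, le_rfl, ContinuousLinearEquiv.refl ℝ Y.1, ?_⟩
  rw [ContinuousLinearEquiv.coe_refl, ContinuousLinearMap.comp_id, sub_self]
  exact (norm_zero (E := Y.1 →L[ℝ] E)).trans_lt hε

lemma ellTop_isOpen_of_forall_mem {S : Set (ClosedSub E)}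
    (h : ∀ Y ∈ S, ∃ F : Submodule ℝ E, FiniteDimensional ℝ F ∧ F ≤ Y.1 ∧
      ∃ ε > 0, ellSet E F Y.1 ε ⊆ S) :
    @IsOpen _ (ellTop E) S := by
  refine @isOpen_iff_forall_mem_open _ (ellTop E) |>.2 fun Y hY => ?_
  obtain ⟨F, hFfin, hFY, ε, hε, hsub⟩ := h Y hY
  exact ⟨_, hsub, TopologicalSpace.isOpen_generateFrom_of_mem
    ⟨F, Y.1, ε, hFfin, Y.2, hFY, hε, rfl⟩, mem_ellSet_self Y hFY hε⟩

lemma exists_equiv_of_mem_ellSet {F Y : Submodule ℝ E} {ε : ℝ} {Z : ClosedSub E}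
    (hZ : Z ∈ ellSet E F Y ε) :
    ∃ Z' : Submodule ℝ E, F ≤ Z' ∧ Z' ≤ Y ∧
      ∃ T : Z' ≃L[ℝ] Z.1, ∀ v : Z', ‖(T v : E) - v‖ ≤ ε * ‖v‖ := by
  obtain ⟨Z', -, hFZ', hZ'Y, T, hT⟩ := hZ
  refine ⟨Z', hFZ', hZ'Y, T, fun v => ?_⟩
  calc ‖(T v : E) - v‖ = ‖(Z.1.subtypeL.comp (T : Z' →L[ℝ] Z.1) - Z'.subtypeL) v‖ := rfl
    _ ≤ ‖Z.1.subtypeL.comp (T : Z' →L[ℝ] Z.1) - Z'.subtypeL‖ * ‖v‖ :=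
      ContinuousLinearMap.le_opNorm _ _
    _ ≤ ε * ‖v‖ := by gcongr

lemma exists_mem_norm_sub_le_of_mem_ellSet {F Y : Submodule ℝ E} {ε : ℝ} {Z : ClosedSub E}
    (hZ : Z ∈ ellSet E F Y ε) {y : E} (hy : y ∈ F) :
    ∃ z ∈ Z.1, ‖z - y‖ ≤ ε * ‖y‖ := by
  obtain ⟨Z', hFZ', -, T, hT⟩ := exists_equiv_of_mem_ellSet hZ
  exact ⟨_, (T ⟨y, hFZ' hy⟩).2, hT ⟨y, hFZ' hy⟩⟩

lemma exists_mem_upper_norm_sub_le_of_mem_ellSet {F Y : Submodule ℝ E} {ε : ℝ} {Z : ClosedSub E}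
    (hZ : Z ∈ ellSet E F Y ε) {z : E} (hz : z ∈ Z.1) :
    ∃ w ∈ Y, ‖z - w‖ ≤ ε * ‖w‖ := by
  obtain ⟨Z', -, hZ'Y, T, hT⟩ := exists_equiv_of_mem_ellSet hZ
  refine ⟨_, hZ'Y (T.symm ⟨z, hz⟩).2, ?_⟩
  simpa using hT (T.symm ⟨z, hz⟩)

end Ellentuck

lemma half_le_norm_sub_of_norm_sub_le {E : Type} [SeminormedAddCommGroup E] {x w z : E}
    {r M ε : ℝ} (hr : 0 < r) (hx : ‖x‖ ≤ M) (hxw : r ≤ ‖x - w‖) (hzw : ‖z - w‖ ≤ ε * ‖w‖)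
    (hε : ε ≤ 1 / 2) (hεr : 2 * ε * (2 * M + r) ≤ r) : r / 2 ≤ ‖x - z‖ := by
  have hxw' := norm_sub_le_norm_sub_add_norm_sub x z w
  have hw : ‖w‖ ≤ ‖x‖ + ‖x - z‖ + ‖z - w‖ := by
    calc ‖w‖ = ‖x - ((x - z) + (z - w))‖ := by abel_nf
      _ ≤ ‖x‖ + (‖x - z‖ + ‖z - w‖) := (norm_sub_le _ _).trans (by gcongr; exact norm_add_le _ _)
      _ = _ := by ring
  rcases le_or_gt (ε * ‖w‖) (r / 2) with hsmall | hlarge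
  · linarith
  · have hε0 : 0 < ε := pos_of_mul_pos_left (by linarith) (norm_nonneg w)
    have hw_large : 2 * M + r < ‖w‖ := by
      by_contra! h
      nlinarith [mul_le_mul_of_nonneg_left h hε0.le]
    nlinarith [norm_nonneg w]

theorem statement4_general (E : Type) [NormedAddCommGroup E] [NormedSpace ℝ E] :
    (∀ U : Set E, IsOpen U →
      @IsOpen _ (ellTop E) {Y : ClosedSub E | ((Y.1 : Set E) ∩ U).Nonempty}) ∧
    (∀ C : Set E, C.Nonempty → Bornology.IsBounded C → IsClosed C → Convex ℝ C →
      @IsOpen _ (ellTop E)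
        {Y : ClosedSub E | ∃ r > (0 : ℝ), ∀ x ∈ C, ∀ y ∈ (Y.1 : Set E), r ≤ ‖x - y‖}) := by
  refine ⟨fun U hU => ellTop_isOpen_of_forall_mem ?_, fun C _ hC _ _ => ?_⟩
  · rintro Y ⟨y, hyY, hyU⟩
    obtain ⟨δ, hδ, hball⟩ := Metric.isOpen_iff.1 hU y hyU
    have hy : 0 < ‖y‖ + 1 := by positivity
    refine ⟨ℝ ∙ y, inferInstance, (Submodule.span_singleton_le_iff_mem y _).2 hyY,
      δ / (‖y‖ + 1), div_pos hδ hy, fun Z hZ => ?_⟩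
    obtain ⟨z, hzZ, hzy⟩ :=
      exists_mem_norm_sub_le_of_mem_ellSet hZ (Submodule.mem_span_singleton_self y)
    refine ⟨z, hzZ, hball ?_⟩
    rw [Metric.mem_ball, dist_eq_norm]
    calc ‖z - y‖ ≤ δ / (‖y‖ + 1) * ‖y‖ := hzy
      _ < δ / (‖y‖ + 1) * (‖y‖ + 1) := by gcongr; linarith
      _ = δ := div_mul_cancel₀ δ hy.ne'
  · obtain ⟨M, hM, hCM⟩ := hC.exists_pos_norm_le
    refine ellTop_isOpen_of_forall_mem fun Y ⟨r, hr, hCY⟩ => ?_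
    have hMr : 0 < 2 * M + r := by positivity
    refine ⟨⊥, inferInstance, bot_le, r / (2 * (2 * M + r)), by positivity,
      fun Z hZ => ⟨r / 2, half_pos hr, fun x hx z hz => ?_⟩⟩
    obtain ⟨w, hwY, hzw⟩ := exists_mem_upper_norm_sub_le_of_mem_ellSet hZ hz
    refine half_le_norm_sub_of_norm_sub_le hr (hCM x hx) (hCY x hx w hwY) hzw ?_ ?_
    · rw [div_le_iff₀ (by positivity)]
      linarith
    · field_simp
      rfl

/-- the Ellentuck topology is finer than the slice topology: the subbasic
sets of the slice topology — `{Y : Y ∩ U ≠ ∅}` for `U` open, and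
`{Y : dist(Y, C) > 0}` for `C` nonempty bounded closed convex — are Ellentuck-open. -/
theorem statement4 (E : Type) [NormedAddCommGroup E] [NormedSpace ℝ E] [CompleteSpace E] :
    (∀ U : Set E, IsOpen U →
      @IsOpen _ (ellTop E) {Y : ClosedSub E | ((Y.1 : Set E) ∩ U).Nonempty}) ∧
    (∀ C : Set E, C.Nonempty → Bornology.IsBounded C → IsClosed C → Convex ℝ C →
      @IsOpen _ (ellTop E)
        {Y : ClosedSub E | ∃ r > (0 : ℝ), ∀ x ∈ C, ∀ y ∈ (Y.1 : Set E), r ≤ ‖x - y‖}) :=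
  statement4_general E
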